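/- arXiv:2310.00644 — 5 statements merged into one kernel-verified Lean document; each statement's English description precedes it below -/
import Mathlib

section
/- For q ≥ 2, m ≥ 2n·log₂ q, for all but at most a q^(-0.16n) fraction of matrices A ∈ (ℤ/qℤ)^(n×m), the q-ary lattice L_q(A) = {x ∈ ℤ^m : ∃ s ∈ ℤ^n, x ≡ Aᵀs (mod q)} has λ₁^∞(L_q(A)) ≥ q/4, i.e., every nonzero vector of L_q(A) has ℓ∞-norm at least q/4. -/
/-!
If `L_q(A)` contains a nonzero `x` with `‖x‖∞ < q/4`, then `x ≡ Aᵀ s (mod q)` for some `s ≠ 0`,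
so every column `a` of `A` has `a ⬝ᵥ s` in the set of residues of `(-q/4, q/4)`. For fixed
`s ≠ 0`, the map `a ↦ a ⬝ᵥ s` is a homomorphism onto a nontrivial subgroup `H` of `ZMod q` whose
fibres all have the same size, and at most `5/8` of `H` is short. A union bound over `s` leaves
at most `q^n (5/8)^m q^(nm)` bad matrices, and `m ≥ 2n log₂ q` together with
`log₂ (8/5) ≥ 3/5` gives `q^n (5/8)^m ≤ q^(-n/5)`.
-/

open scoped Matrix
open Finset

namespace AddMonoidHom

variable {G M : Type*} [AddGroup G] [Fintype G] [AddGroup M] [DecidableEq M]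

theorem card_filter_map_mem (φ : G →+ M) (T : Finset M) [DecidablePred (· ∈ φ.range)] :
    #{g | φ g ∈ T} = #{c ∈ T | c ∈ φ.range} * #{g | φ g = 0} := by
  rw [card_eq_sum_card_fiberwise (f := φ) (t := T) fun g hg => by simpa using hg, card_filter,
    sum_mul]
  refine sum_congr rfl fun c hc => ?_
  rw [filter_filter, boole_mul]
  split_ifs with hrange
  · rw [← card_fiber_eq_of_mem_range φ hrange ⟨0, map_zero φ⟩]
    congr 1
    ext g
    simp only [mem_filter, mem_univ, true_and, and_iff_right_iff_imp]
    rintro rfl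
    exact hc
  · exact card_eq_zero.2 (filter_eq_empty_iff.2 fun g _ hg => hrange ⟨g, hg.2⟩)

theorem card_filter_map_mem_mul_card_range (φ : G →+ M) (T : Finset M)
    [DecidablePred (· ∈ φ.range)] :
    #{g | φ g ∈ T} * Nat.card φ.range = #{c ∈ T | c ∈ φ.range} * Fintype.card G := by
  have hcard : Fintype.card G = Nat.card φ.range * #{g | φ g = 0} := by
    have hrange : Nat.card φ.range = #(univ.image φ) := by
      rw [← Set.ncard_coe_finset, coe_image, coe_univ, Set.image_univ, ← coe_range,
        ← SetLike.coe_sort_coe, Nat.card_coe_set_eq]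
    have := card_filter_map_mem φ (univ.image φ)
    rwa [filter_true_of_mem (fun g _ => mem_image_of_mem φ (mem_univ g)), card_univ,
      filter_true_of_mem (fun c hc => ?_), ← hrange] at this
    obtain ⟨g, -, rfl⟩ := mem_image.1 hc
    exact ⟨g, rfl⟩
  rw [card_filter_map_mem, hcard]
  ring

end AddMonoidHom

/-- `Icc (-q) q` only makes the set finite; `mem_shortResidues` is the intended meaning. -/
noncomputable def shortResidues (q : ℕ) : Finset (ZMod q) :=
  ((Icc (-(q : ℤ)) q).filter fun t : ℤ => 4 * |t| < q).image (↑)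

theorem mem_shortResidues {q : ℕ} {c : ZMod q} :
    c ∈ shortResidues q ↔ ∃ t : ℤ, 4 * |t| < q ∧ (t : ZMod q) = c := by
  simp only [shortResidues, mem_image, mem_filter, mem_Icc, and_assoc]
  refine exists_congr fun t => ⟨fun h => ⟨h.2.2.1, h.2.2.2⟩, fun h => ?_⟩
  obtain ⟨hlow, hupp⟩ := abs_le.1 (by linarith [abs_nonneg t] : |t| ≤ q)
  exact ⟨hlow, hupp, h⟩

theorem AddSubgroup.dvd_of_intCast_mem {q d : ℕ} [NeZero q] (H : AddSubgroup (ZMod q))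
    (hq : q = Nat.card H * d) {t : ℤ} (ht : (t : ZMod q) ∈ H) : (d : ℤ) ∣ t := by
  have hnsmul : Nat.card H • (⟨t, ht⟩ : H) = 0 := card_nsmul_eq_zero'
  have hzero : ((Nat.card H * t : ℤ) : ZMod q) = 0 := by
    push_cast
    rw [← nsmul_eq_mul]
    exact congrArg Subtype.val hnsmul
  rw [ZMod.intCast_zmod_eq_zero_iff_dvd, show (q : ℤ) = Nat.card H * d by exact_mod_cast hq]
    at hzero
  exact Int.dvd_of_mul_dvd_mul_left (by exact_mod_cast Nat.card_pos.ne') hzero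

theorem card_filter_shortResidues_mem_le {q : ℕ} [NeZero q] (H : AddSubgroup (ZMod q))
    [DecidablePred (· ∈ H)] (hH : 2 ≤ Nat.card H) :
    8 * #{c ∈ shortResidues q | c ∈ H} ≤ 5 * Nat.card H := by
  obtain ⟨d, hqd⟩ : Nat.card H ∣ q := H.card_addSubgroup_dvd_card.trans (Nat.card_zmod q).dvd
  set J := Nat.card H
  -- The short elements of `H` are the `d k` with `4 |k| < J`; there are `2 ⌊(J - 1) / 4⌋ + 1`
  -- of them, which is at most `5 J / 8` once `J ≥ 2` (with near-equality at `J = 5`).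
  set r : ℤ := ((J : ℤ) - 1) / 4
  have hsub : {c ∈ shortResidues q | c ∈ H} ⊆
      (Icc (-r) r).image fun k : ℤ => ((d * k : ℤ) : ZMod q) := by
    intro c hc
    obtain ⟨hshort, hcH⟩ := mem_filter.1 hc
    obtain ⟨t, ht, rfl⟩ := mem_shortResidues.1 hshort
    obtain ⟨k, rfl⟩ := H.dvd_of_intCast_mem hqd hcH
    refine mem_image.2 ⟨k, mem_Icc.2 ?_, rfl⟩
    have hd : (0 : ℤ) < d :=
      Int.natCast_pos.2 (Nat.pos_of_ne_zero fun h => NeZero.ne q (by simp [hqd, h]))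
    rw [abs_mul, abs_of_pos hd, hqd, Nat.cast_mul] at ht
    have : 4 * |k| < J := lt_of_mul_lt_mul_right (by linarith) hd.le
    rw [← abs_le]
    omega
  calc 8 * #{c ∈ shortResidues q | c ∈ H} ≤ 8 * #(Icc (-r) r) :=
        Nat.mul_le_mul_left 8 ((card_le_card hsub).trans card_image_le)
    _ ≤ 5 * J := by rw [Int.card_Icc]; omega

theorem AddMonoidHom.card_filter_map_mem_shortResidues_le {G : Type*} [AddGroup G] [Fintype G]
    {q : ℕ} [NeZero q] (φ : G →+ ZMod q) (hφ : φ ≠ 0) :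
    8 * #{g | φ g ∈ shortResidues q} ≤ 5 * Fintype.card G := by
  classical
  have hrange : 2 ≤ Nat.card φ.range :=
    (AddSubgroup.one_lt_card_iff_ne_bot _).2 (mt range_eq_bot_iff.1 hφ)
  refine Nat.le_of_mul_le_mul_right ?_ (by omega : 0 < Nat.card φ.range)
  calc 8 * #{g | φ g ∈ shortResidues q} * Nat.card φ.range
      = 8 * #{c ∈ shortResidues q | c ∈ φ.range} * Fintype.card G := by
        rw [mul_assoc, φ.card_filter_map_mem_mul_card_range, mul_assoc]
    _ ≤ 5 * Nat.card φ.range * Fintype.card G :=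
        Nat.mul_le_mul_right _ (card_filter_shortResidues_mem_le φ.range hrange)
    _ = 5 * Fintype.card G * Nat.card φ.range := by ring

theorem Matrix.card_filter_forall_col {ι κ α : Type*} [Fintype ι] [Fintype κ] [DecidableEq ι]
    [DecidableEq κ] [Fintype α] (P : (ι → α) → Prop) [DecidablePred P] :
    #{A : Matrix ι κ α | ∀ j, P fun i => A i j} = #{v | P v} ^ Fintype.card κ := by
  refine (card_equiv (Matrix.of.symm.trans (Equiv.piComm fun _ _ => α))
    (t := Fintype.piFinset fun _ => {v | P v}) fun A => ?_).trans ?_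
  · simp only [mem_filter, mem_univ, true_and, Equiv.trans_apply, Fintype.mem_piFinset]
    rfl
  · rw [Fintype.card_piFinset, prod_const, card_univ]

theorem card_filter_dotProduct_mem_shortResidues_le {ι : Type*} [Fintype ι] [DecidableEq ι]
    {q : ℕ} [NeZero q] {s : ι → ZMod q} (hs : s ≠ 0) :
    8 * #{v : ι → ZMod q | v ⬝ᵥ s ∈ shortResidues q} ≤ 5 * q ^ Fintype.card ι := by
  let φ : (ι → ZMod q) →+ ZMod q := AddMonoidHom.mk' (· ⬝ᵥ s) fun v w => add_dotProduct v w s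
  have hφ : φ ≠ 0 := by
    obtain ⟨i, hi⟩ := Function.ne_iff.1 hs
    refine fun h => hi ?_
    simpa [φ] using DFunLike.congr_fun h (Pi.single i 1)
  simpa [φ, ZMod.card] using φ.card_filter_map_mem_shortResidues_le hφ

theorem card_exists_ne_zero_forall_dotProduct_mem_shortResidues_le {ι κ : Type*}
    [Fintype ι] [Fintype κ] {q : ℕ} [NeZero q] :
    (Nat.card {A : Matrix ι κ (ZMod q) // ∃ s ≠ 0, ∀ j, (fun i => A i j) ⬝ᵥ s ∈ shortResidues q}
      : ℝ) ≤ q ^ Fintype.card ι * (5 / 8 * q ^ Fintype.card ι) ^ Fintype.card κ := by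
  classical
  have hunion : Nat.card {A : Matrix ι κ (ZMod q) //
        ∃ s ≠ 0, ∀ j, (fun i => A i j) ⬝ᵥ s ∈ shortResidues q} ≤
      ∑ s ∈ {s | s ≠ 0},
        #{A : Matrix ι κ (ZMod q) | ∀ j, (fun i => A i j) ⬝ᵥ s ∈ shortResidues q} := by
    rw [Nat.card_eq_fintype_card, Fintype.card_subtype]
    refine (card_le_card fun A hA => ?_).trans card_biUnion_le
    obtain ⟨s, hs, hA⟩ := (mem_filter.1 hA).2
    exact mem_biUnion.2 ⟨s, by simpa using hs, by simpa using hA⟩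
  have hterm : ∀ s ∈ ({s | s ≠ 0} : Finset (ι → ZMod q)),
      (#{A : Matrix ι κ (ZMod q) | ∀ j, (fun i => A i j) ⬝ᵥ s ∈ shortResidues q} : ℝ) ≤
        (5 / 8 * q ^ Fintype.card ι) ^ Fintype.card κ := by
    intro s hs
    rw [Matrix.card_filter_forall_col (fun v : ι → ZMod q => v ⬝ᵥ s ∈ shortResidues q),
      Nat.cast_pow]
    refine pow_le_pow_left₀ (Nat.cast_nonneg _) ?_ _
    have := card_filter_dotProduct_mem_shortResidues_le (mem_filter.1 hs).2
    rw [div_mul_eq_mul_div, le_div_iff₀ (by norm_num)]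
    exact_mod_cast (mul_comm _ _).trans_le this
  calc _ ≤ ∑ s ∈ {s | s ≠ 0},
        (#{A : Matrix ι κ (ZMod q) | ∀ j, (fun i => A i j) ⬝ᵥ s ∈ shortResidues q} : ℝ) := by
        exact_mod_cast hunion
    _ ≤ #({s | s ≠ 0} : Finset (ι → ZMod q)) • (5 / 8 * q ^ Fintype.card ι) ^ Fintype.card κ :=
        sum_le_card_nsmul _ _ _ hterm
    _ ≤ _ := by
        rw [nsmul_eq_mul]
        refine mul_le_mul_of_nonneg_right ?_ (by positivity)
        exact_mod_cast (card_filter_le _ _).trans_eq (by simp [ZMod.card])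

theorem three_fifths_le_logb_two_eight_fifths : (3 / 5 : ℝ) ≤ Real.logb 2 (8 / 5) := by
  have h : Real.logb 2 8 ≤ Real.logb 2 ((8 / 5) ^ 5) :=
    Real.logb_le_logb_of_le one_lt_two (by norm_num) (by norm_num)
  rw [Real.logb_pow, show (8 : ℝ) = 2 ^ 3 by norm_num, Real.logb_pow,
    Real.logb_self_eq_one one_lt_two] at h
  push_cast at h
  linarith

theorem pow_mul_five_eighths_pow_le {q : ℝ} (hq : 1 ≤ q) {n m : ℕ}
    (hm : 2 * n * Real.logb 2 q ≤ m) : q ^ n * (5 / 8) ^ m ≤ q ^ (-(0.16) * (n : ℝ)) := by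
  have hq0 : 0 < q := by linarith
  have hL : 0 ≤ Real.logb 2 q := Real.logb_nonneg one_lt_two hq
  rw [← Real.logb_le_logb one_lt_two (by positivity) (by positivity), Real.logb_mul (by positivity)
    (by positivity), Real.logb_pow, Real.logb_pow, Real.logb_rpow_eq_mul_logb_of_pos hq0,
    show (5 / 8 : ℝ) = (8 / 5)⁻¹ by norm_num, Real.logb_inv]
  have h58 := three_fifths_le_logb_two_eight_fifths
  nlinarith [mul_nonneg (Nat.cast_nonneg n) hL, mul_le_mul_of_nonneg_left h58 (Nat.cast_nonneg m)]

theorem ne_zero_and_forall_dotProduct_mem_shortResidues {ι κ : Type*} [Fintype ι] {q : ℕ}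
    {A : Matrix ι κ (ZMod q)} {x : κ → ℤ} (hx : x ≠ 0) (hshort : ∀ j, 4 * |x j| < q)
    {s : ι → ZMod q} (hxs : ∀ j, (x j : ZMod q) = (fun i => A i j) ⬝ᵥ s) :
    s ≠ 0 ∧ ∀ j, (fun i => A i j) ⬝ᵥ s ∈ shortResidues q := by
  refine ⟨?_, fun j => mem_shortResidues.2 ⟨x j, hshort j, hxs j⟩⟩
  rintro rfl
  refine hx (funext fun j => Int.eq_zero_of_abs_lt_dvd (m := q) ?_ ?_)
  · simpa [ZMod.intCast_zmod_eq_zero_iff_dvd] using hxs j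
  · linarith [hshort j, abs_nonneg (x j)]

/-- For `q ≥ 2` and `m ≥ 2n·log₂ q`, for all but at most a `q^(-0.16n)` fraction of
matrices `A ∈ (ℤ/qℤ)^(n×m)` (i.e. the number of bad matrices is at most
`q^(-0.16n) · q^(nm)`), every nonzero vector of the `q`-ary lattice
`L_q(A) = {x ∈ ℤ^m : ∃ s, x ≡ Aᵀs (mod q)}` has `ℓ∞`-norm at least `q/4`. -/
theorem stmt_1 (n m q : ℕ) (hq : 2 ≤ q) (hm : 2 * n * Real.logb 2 q ≤ m) :
    (Nat.card {A : Matrix (Fin n) (Fin m) (ZMod q) //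
        ¬ ∀ x : Fin m → ℤ, x ≠ 0 →
          (∃ s : Fin n → ZMod q, ∀ j, ((x j : ZMod q)) = ∑ i, A i j * s i) →
          ∃ j, (q : ℝ) / 4 ≤ |(x j : ℝ)|} : ℝ)
      ≤ (q : ℝ) ^ (-(0.16) * (n : ℝ)) * (q : ℝ) ^ (n * m) := by
  have : NeZero q := ⟨by omega⟩
  calc _ ≤ (Nat.card {A : Matrix (Fin n) (Fin m) (ZMod q) //
          ∃ s ≠ 0, ∀ j, (fun i => A i j) ⬝ᵥ s ∈ shortResidues q} : ℝ) := by
        refine Nat.cast_le.2 <| Nat.card_le_card_of_injective _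
          (Subtype.impEmbedding _ _ fun A hA => ?_).injective
        simp only [not_forall, not_exists, not_le] at hA
        obtain ⟨x, hx, ⟨s, hxs⟩, hshort⟩ := hA
        have hshort' : ∀ j, 4 * |x j| < q := fun j => by
          have : ((4 * |x j| : ℤ) : ℝ) < (q : ℤ) := by push_cast; linarith [hshort j]
          exact_mod_cast this
        exact ⟨s, ne_zero_and_forall_dotProduct_mem_shortResidues hx hshort' hxs⟩
    _ ≤ q ^ n * (5 / 8 * q ^ n) ^ m := by
        simpa using card_exists_ne_zero_forall_dotProduct_mem_shortResidues_le
          (ι := Fin n) (κ := Fin m) (q := q)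
    _ = q ^ n * (5 / 8) ^ m * q ^ (n * m) := by ring
    _ ≤ _ := mul_le_mul_of_nonneg_right
        (pow_mul_five_eighths_pow_le (by exact_mod_cast hq.trans' one_le_two) hm) (by positivity)
end

section
/- For any integer q ≥ 1, any v ∈ ℤ/qℤ, and any nonzero s₁ ∈ ℤ/qℤ, the probability over a uniformly random a₁ ∈ ℤ/qℤ that s₁·a₁ + v mod q lies in the open interval (-q/4, q/4) (representing residues in (-q/2, q/2]) is at most 2/3. -/
/-- For any integer `q ≥ 1`, any `v ∈ ℤ/qℤ` and nonzero `s₁ ∈ ℤ/qℤ`, the probability over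
a uniformly random `a₁ ∈ ℤ/qℤ` that the representative of `s₁·a₁ + v` in `(-q/2, q/2]`
has absolute value strictly less than `q/4` is at most `2/3`. -/
theorem stmt_2 (q : ℕ) [NeZero q] (hq : 1 ≤ q) (v s₁ : ZMod q) (hs : s₁ ≠ 0) :
    ((Finset.univ.filter fun a₁ : ZMod q =>
        4 * |(s₁ * a₁ + v).valMinAbs| < (q : ℤ)).card : ℝ) / (q : ℝ) ≤ 2 / 3 := by
  have hq0 : (0:ℤ) < (q:ℤ) := by exact_mod_cast hq
  -- Step 1: find c : ℕ with q ≤ 4c, 2c ≤ q and t : ZMod q with s₁ * t = c.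
  obtain ⟨c, t, hst, hc4, hc2⟩ :
      ∃ (c : ℕ) (t : ZMod q), s₁ * t = (c : ZMod q) ∧ q ≤ 4 * c ∧ 2 * c ≤ q := by
    set g := Nat.gcd s₁.val q with hg
    have hsv : s₁.val ≠ 0 := by
      simpa [ZMod.val_eq_zero] using hs
    have hg0 : 0 < g := Nat.gcd_pos_of_pos_left _ (Nat.pos_of_ne_zero hsv)
    have hgq : g ∣ q := Nat.gcd_dvd_right _ _
    have hglt : g < q := lt_of_le_of_lt (Nat.le_of_dvd (Nat.pos_of_ne_zero hsv)
      (Nat.gcd_dvd_left _ _)) (ZMod.val_lt s₁)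
    have h2g : 2 * g ≤ q := by
      obtain ⟨m, hm⟩ := hgq
      have hm2 : 2 ≤ m := by
        rcases Nat.lt_or_ge m 2 with h | h
        · interval_cases m <;> omega
        · exact h
      calc 2 * g = g * 2 := by ring
        _ ≤ g * m := Nat.mul_le_mul_left _ hm2
        _ = q := hm.symm
    -- u with s₁ * u = g in ZMod q
    have hu : ∃ u : ZMod q, s₁ * u = (g : ZMod q) := by
      refine ⟨((Nat.gcdA s₁.val q : ℤ) : ZMod q), ?_⟩
      have hbez := Nat.gcd_eq_gcd_ab s₁.val q
      have : ((g : ℤ) : ZMod q) = ((s₁.val * Nat.gcdA s₁.val q + q * Nat.gcdB s₁.val q : ℤ) : ZMod q) := by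
        exact_mod_cast congrArg (fun z : ℤ => ((z : ZMod q))) hbez
      push_cast at this
      rw [ZMod.natCast_self] at this
      simp only [ZMod.natCast_val, ZMod.cast_id] at this
      push_cast
      rw [this]; ring
    obtain ⟨u, hu⟩ := hu
    rcases Nat.lt_or_ge (4 * g) q with h4g | h4g
    · -- small g: take c = k * g with k = ⌈q / (4g)⌉
      obtain ⟨k, hk1, hk2⟩ : ∃ k : ℕ, q ≤ 4 * (k * g) ∧ 2 * (k * g) ≤ q := by
        refine ⟨(q + 4 * g - 1) / (4 * g), ?_, ?_⟩
        · have h := Nat.div_add_mod (q + 4 * g - 1) (4 * g)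
          have hmod := Nat.mod_lt (q + 4 * g - 1) (y := 4 * g) (by omega)
          set K := (q + 4 * g - 1) / (4 * g) with hK
          have e : 4 * (K * g) = 4 * g * K := by ring
          omega
        · have h := Nat.div_mul_le_self (q + 4 * g - 1) (4 * g)
          set K := (q + 4 * g - 1) / (4 * g) with hK
          have e : K * (4 * g) = 4 * (K * g) := by ring
          omega
      refine ⟨k * g, (k : ZMod q) * u, ?_, hk1, hk2⟩
      push_cast
      rw [← hu]; ring
    · exact ⟨g, u, by rw [hu], h4g, h2g⟩
  -- Step 2: key structural fact
  set P : ZMod q → Prop := fun a => 4 * |(s₁ * a + v).valMinAbs| < (q : ℤ) with hP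
  have hshift : ∀ a : ZMod q, s₁ * (a + t) + v = (s₁ * a + v) + (c : ZMod q) := by
    intro a; rw [mul_add, hst]; ring
  have hstep : ∀ x : ZMod q, (q:ℤ) ∣ ((x + (c : ZMod q)).valMinAbs - x.valMinAbs - c) := by
    intro x
    rw [← ZMod.intCast_zmod_eq_zero_iff_dvd]
    push_cast
    ring
  have hstep' : ∀ x : ZMod q, 4 * |x.valMinAbs| < q → 4 * |(x + (c:ZMod q)).valMinAbs| < q →
      (x + (c:ZMod q)).valMinAbs = x.valMinAbs + c := by
    intro x h0 h1
    have hd := hstep x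
    have b0 := abs_lt.mp (show |x.valMinAbs| < q by
      nlinarith [abs_nonneg x.valMinAbs])
    have b1 := abs_lt.mp (show |(x + (c:ZMod q)).valMinAbs| < q by
      nlinarith [abs_nonneg (x + (c:ZMod q)).valMinAbs])
    have b0' : 4 * x.valMinAbs < q ∧ -(q:ℤ) < 4 * x.valMinAbs := by
      constructor <;> nlinarith [le_abs_self x.valMinAbs, neg_abs_le x.valMinAbs]
    have b1' : 4 * (x + (c:ZMod q)).valMinAbs < q ∧ -(q:ℤ) < 4 * (x + (c:ZMod q)).valMinAbs := by
      constructor <;> nlinarith [le_abs_self (x + (c:ZMod q)).valMinAbs,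
        neg_abs_le (x + (c:ZMod q)).valMinAbs]
    have hc4' : (q:ℤ) ≤ 4 * c := by exact_mod_cast hc4
    have hc2' : 2 * (c:ℤ) ≤ q := by exact_mod_cast hc2
    have := Int.eq_zero_of_abs_lt_dvd hd (by
      rw [abs_lt]; constructor <;> linarith)
    linarith
  have key : ∀ a : ZMod q, ¬ (P a ∧ P (a + t) ∧ P (a + t + t)) := by
    rintro a ⟨h0, h1, h2⟩
    rw [hP] at h0 h1 h2
    simp only [hshift] at h1 h2
    set x := s₁ * a + v with hx
    have e1 := hstep' x h0 h1
    have e2 := hstep' (x + (c:ZMod q)) h1 h2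
    have hc4' : (q:ℤ) ≤ 4 * c := by exact_mod_cast hc4
    nlinarith [le_abs_self x.valMinAbs, neg_abs_le x.valMinAbs,
      le_abs_self (x + (c:ZMod q) + (c:ZMod q)).valMinAbs,
      neg_abs_le (x + (c:ZMod q) + (c:ZMod q)).valMinAbs, e1, e2]
  -- Step 3: counting
  classical
  set χ : ZMod q → ℕ := fun a => if P a then 1 else 0 with hχ
  set S := Finset.univ.filter P with hS
  have hsum : ∀ w : ZMod q, ∑ a : ZMod q, χ (a + w) = S.card := by
    intro w
    rw [hS, Finset.card_filter]
    exact Fintype.sum_equiv (Equiv.addRight w) _ _ (fun a => rfl)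
  have hbound : 3 * S.card ≤ 2 * q := by
    have h1 : ∑ a : ZMod q, (χ a + χ (a + t) + χ (a + t + t)) = 3 * S.card := by
      rw [Finset.sum_add_distrib, Finset.sum_add_distrib]
      have h0 := hsum 0
      simp only [add_zero] at h0
      have ht1 := hsum t
      have ht2 := hsum (t + t)
      simp only [← add_assoc] at ht2
      rw [h0, ht1, ht2]; ring
    have h2 : ∑ a : ZMod q, (χ a + χ (a + t) + χ (a + t + t)) ≤ ∑ _a : ZMod q, 2 := by
      apply Finset.sum_le_sum
      intro a _
      have := key a
      rw [hχ]
      by_cases p0 : P a <;> by_cases p1 : P (a + t) <;> by_cases p2 : P (a + t + t) <;>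
        simp [p0, p1, p2] at this ⊢
    have h3 : ∑ _a : ZMod q, 2 = 2 * q := by
      rw [Finset.sum_const, Finset.card_univ, ZMod.card, smul_eq_mul, mul_comm]
    omega
  -- conclude
  have hqR : (0:ℝ) < q := by exact_mod_cast hq
  rw [div_le_div_iff₀ hqR (by norm_num)]
  have : (S.card : ℝ) * 3 ≤ 2 * q := by exact_mod_cast by omega
  convert this using 2
end

section
/- For each d ∈ ℤ/tℤ define the vector ψ_d ∈ ℂ^t by (ψ_d)_x = exp(-πi(x-d)²/t) for x ∈ ℤ/tℤ. Then for all d, d' ∈ ℤ/tℤ, the inner product ⟨ψ_{d'}, ψ_d⟩ equals t if d = d' and 0 otherwise; in particular {ψ_d/√t}_{d ∈ ℤ/tℤ} is an orthonormal basis of ℂ^t. -/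
/-!
Expanding the squares, the quadratic terms in `x` cancel in `conj (ψ_{d'} x) * ψ_d x`, leaving a
constant phase times `exp (2πi x (d - d') / t)`. The latter depends only on residues mod `t`, so it
is the standard additive character of `ℤ/tℤ` evaluated at `x (d - d')`, and summing a primitive
character over `x` gives `t` if `d = d'` and `0` otherwise.
-/

open Complex Real

/-- The vector `ψ_d ∈ ℂ^t`, `(ψ_d)_x = exp(-πi(x-d)²/t)`, with `x, d` represented by
their standard representatives in `{0, …, t-1}`. -/
noncomputable def psiVec (t : ℕ) [NeZero t] (d : ZMod t) : EuclideanSpace ℂ (ZMod t) :=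
  WithLp.toLp 2 (fun x : ZMod t => Complex.exp (-(π : ℂ) * Complex.I * ((x.val : ℂ) - (d.val : ℂ)) ^ 2 / (t : ℂ)))

open ComplexConjugate

section

variable {t : ℕ} [NeZero t]

theorem conj_psiVec_mul_psiVec (d d' x : ZMod t) :
    conj (psiVec t d' x) * psiVec t d x =
      exp (π * I * ((d'.val : ℂ) ^ 2 - (d.val : ℂ) ^ 2) / t) * ZMod.stdAddChar (x * (d - d')) := by
  have hcast : ((x.val * ((d.val : ℤ) - d'.val) : ℤ) : ZMod t) = x * (d - d') := by
    push_cast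
    simp only [ZMod.natCast_zmod_val]
  have ht : (t : ℂ) ≠ 0 := NeZero.ne _
  rw [← hcast, ZMod.stdAddChar_coe]
  simp only [psiVec, PiLp.toLp_apply]
  rw [← exp_conj, ← Complex.exp_add, ← Complex.exp_add]
  congr 1
  simp only [map_div₀, map_mul, map_neg, map_pow, map_sub, conj_I, conj_natCast, conj_ofReal]
  push_cast
  field_simp
  ring

theorem inner_psiVec_psiVec (d d' : ZMod t) :
    inner ℂ (psiVec t d') (psiVec t d) = if d = d' then (t : ℂ) else 0 := by
  have hsum : inner ℂ (psiVec t d') (psiVec t d) = ∑ x, conj (psiVec t d' x) * psiVec t d x := by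
    simp [PiLp.inner_apply, mul_comm]
  simp only [hsum, conj_psiVec_mul_psiVec, ← Finset.mul_sum,
    AddChar.sum_mulShift _ (ZMod.isPrimitive_stdAddChar t), sub_eq_zero, ZMod.card]
  split_ifs with h
  · simp [h]
  · rw [Nat.cast_zero, mul_zero]

end

/-- For all `d, d' ∈ ℤ/tℤ`, `⟨ψ_{d'}, ψ_d⟩ = t` if `d = d'` and `0` otherwise; in
particular `{ψ_d/√t}` is an orthonormal family (hence an orthonormal basis of `ℂ^t`). -/
theorem stmt_4 (t : ℕ) [NeZero t] :
    (∀ d d' : ZMod t,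
        (inner ℂ (psiVec t d') (psiVec t d) : ℂ) = if d = d' then (t : ℂ) else 0) ∧
      Orthonormal ℂ (fun d : ZMod t => ((Real.sqrt t : ℂ))⁻¹ • psiVec t d) := by
  refine ⟨inner_psiVec_psiVec, orthonormal_iff_ite.mpr fun d' d => ?_⟩
  have hsqrt : ((Real.sqrt t : ℂ)) ^ 2 = t := by
    rw [← ofReal_pow, Real.sq_sqrt t.cast_nonneg, ofReal_natCast]
  have ht : (t : ℂ) ≠ 0 := NeZero.ne _
  rw [inner_smul_left, inner_smul_right, inner_psiVec_psiVec, map_inv₀, conj_ofReal]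
  rcases eq_or_ne d' d with rfl | hne
  · rw [if_pos rfl, if_pos rfl, ← mul_assoc, ← mul_inv, ← sq, hsqrt, inv_mul_cancel₀ ht]
  · rw [if_neg hne.symm, if_neg hne, mul_zero, mul_zero]
end

section
/- Let n, t be positive integers and r a real with r ≥ 30·t·n·log n. Given the complex Gaussian state |φ_c⟩ = Σ_{x∈ℤ} ρ_r(x) e^{-πix²/t} |x+c⟩ with unknown integer center c, measuring the residue mod t of the position register in the basis {|ψ_d⟩ = Σ_{x∈ℤ_t} e^{-πi(x-d)²/t}|x⟩}_{d∈ℤ_t} yields the outcome d = c mod t with probability at least 1 - 8π t log n / r - negl(n) ≥ 1 - 1/n. -/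
/-!
With `s = √2 r` one has `ρ_r(u) ρ_r(v) = ρ_s(u + v) ρ_s(u - v)`. Hence, writing
`Θ(α) = ∑_k ρ_s(α + 2tk)` for the periodization of `ρ_s` with period `2t`, the numerator equals
`∑_{y, y' < t} ρ_s(y - y') Θ(y + y' - 2c)` and `∑_x ρ_r(x)² = ∑_{i < t} Θ(2i)`. Since `ρ_s` is
unimodal and bounded by `1`, two values of `Θ` differ by at most `2`, and Poisson summation gives
`Θ(0) ≥ s / 2t ≥ 8n`. So the probability is at least `ρ_s(t) (Θ(0) - 2) / (Θ(0) + 2)`, and both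
factors are at least `1 - 1/(2n)`.
-/

open Real

noncomputable def rhoG (s x : ℝ) : ℝ := Real.exp (-π * x ^ 2 / s ^ 2)

open Set

theorem tsum_le_add_add_tsum_of_le_shift {c g : ℤ → ℝ} (hc : Summable c) (hg : Summable g)
    (hg0 : ∀ j, 0 ≤ g j) (a : ℤ) (hlt : ∀ j < a, c j ≤ g j)
    (hgt : ∀ j, a + 1 < j → c j ≤ g (j - 1)) :
    ∑' j, c j ≤ c a + c (a + 1) + ∑' j, g j := by
  rw [← hc.sum_add_tsum_compl (s := {a, a + 1}), Finset.sum_pair (by omega)]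
  gcongr
  refine Summable.tsum_le_tsum_of_inj
    (fun j : ↑((({a, a + 1} : Finset ℤ) : Set ℤ)ᶜ) => if (j : ℤ) < a then (j : ℤ) else j - 1)
    ?_ (fun j _ => hg0 j) ?_ (hc.subtype _) hg
  · rintro ⟨i, hi⟩ ⟨j, hj⟩ hij
    simp only [Finset.coe_insert, Finset.coe_singleton, mem_compl_iff, mem_insert_iff,
      mem_singleton_iff, not_or] at hi hj
    rw [Subtype.mk.injEq]
    dsimp only at hij
    split_ifs at hij <;> omega
  · rintro ⟨j, hj⟩
    simp only [Finset.coe_insert, Finset.coe_singleton, mem_compl_iff, mem_insert_iff,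
      mem_singleton_iff, not_or] at hj
    dsimp only
    split_ifs with h
    · exact hlt j h
    · exact hgt j (by omega)

theorem tsum_grid_le_two_add_tsum_grid {f : ℝ → ℝ} (hf0 : ∀ x, 0 ≤ f x) (hf1 : ∀ x, f x ≤ 1)
    (hmono : MonotoneOn f (Iic 0)) (hanti : AntitoneOn f (Ici 0)) {T : ℝ} (hT : 0 < T)
    {α β : ℝ} (hα : Summable fun k : ℤ => f (α + k * T))
    (hβ : Summable fun j : ℤ => f (β + j * T)) :
    ∑' j : ℤ, f (β + j * T) ≤ 2 + ∑' k : ℤ, f (α + k * T) := by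
  -- After shifting the `α`-grid by `D`, its `j`-th point lies in `[β + jT, β + (j+1)T)`;
  -- the peak `0` of `f` lies in `[β + aT, β + (a+1)T)`. Left of the peak the `j`-th `β`-point
  -- is dominated by the `j`-th `α`-point, right of it by the `(j-1)`-st one.
  obtain ⟨D, hD₁, hD₂⟩ : ∃ D : ℤ, β + D * T ≤ α ∧ α < β + (D + 1) * T :=
    ⟨⌊(α - β) / T⌋, by
      have h₁ := Int.floor_le ((α - β) / T)
      have h₂ := Int.lt_floor_add_one ((α - β) / T)
      rw [le_div_iff₀ hT] at h₁
      rw [div_lt_iff₀ hT] at h₂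
      constructor <;> linarith⟩
  obtain ⟨a, ha₁, ha₂⟩ : ∃ a : ℤ, β + a * T ≤ 0 ∧ 0 < β + (a + 1) * T :=
    ⟨⌊-β / T⌋, by
      have h₁ := Int.floor_le (-β / T)
      have h₂ := Int.lt_floor_add_one (-β / T)
      rw [le_div_iff₀ hT] at h₁
      rw [div_lt_iff₀ hT] at h₂
      constructor <;> linarith⟩
  have hshift : ∑' k : ℤ, f (α + k * T) = ∑' j : ℤ, f (α + ((j - D : ℤ) : ℝ) * T) :=
    ((Equiv.subRight D).tsum_eq fun k : ℤ => f (α + k * T)).symm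
  have hα' : Summable fun j : ℤ => f (α + ((j - D : ℤ) : ℝ) * T) :=
    (Equiv.subRight D).summable_iff.mpr hα
  calc ∑' j : ℤ, f (β + j * T)
      ≤ f (β + a * T) + f (β + ((a + 1 : ℤ) : ℝ) * T) + ∑' j : ℤ, f (α + ((j - D : ℤ) : ℝ) * T) :=
        tsum_le_add_add_tsum_of_le_shift hβ hα' (fun _ => hf0 _) a ?_ ?_
    _ ≤ 2 + ∑' k : ℤ, f (α + k * T) := by
        rw [hshift]; linarith [hf1 (β + a * T), hf1 (β + ((a + 1 : ℤ) : ℝ) * T)]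
  · intro j hj
    have hj' : (j : ℝ) + 1 ≤ a := by exact_mod_cast hj
    have hle : β + (j + 1) * T ≤ β + a * T := by nlinarith
    push_cast
    apply hmono (mem_Iic.2 (by nlinarith)) (mem_Iic.2 (by nlinarith))
    nlinarith
  · intro j hj
    have hj' : (a : ℝ) + 2 ≤ j := by exact_mod_cast (show a + 2 ≤ j by omega)
    have hle : β + (a + 1) * T ≤ β + (j - 1) * T := by nlinarith
    push_cast
    apply hanti (mem_Ici.2 (by nlinarith)) (mem_Ici.2 (by nlinarith))
    nlinarith

theorem tsum_int_eq_sum_fin_tsum {E : Type*} [NormedAddCommGroup E] [CompleteSpace E]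
    {f : ℤ → E} (hf : Summable f) (t : ℕ) [NeZero t] :
    ∑' x, f x = ∑ i : Fin t, ∑' q : ℤ, f (q * t + i) := by
  have hprod : Summable fun p : ℤ × Fin t => f (p.1 * t + p.2) :=
    (Int.divModEquiv t).symm.summable_iff.2 hf
  have hslice (i : Fin t) : Summable fun q : ℤ => f (q * t + i) :=
    hf.comp_injective fun a b h => by simpa [NeZero.ne t] using h
  rw [← (Int.divModEquiv t).symm.tsum_eq, ← Summable.tsum_finsetSum fun i _ => hslice i]
  simp only [Int.divModEquiv_symm_apply]
  rw [hprod.tsum_prod' fun q => (hasSum_fintype _).summable]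
  simp only [tsum_fintype]

theorem rhoG_nonneg (s x : ℝ) : 0 ≤ rhoG s x := (exp_pos _).le

theorem rhoG_zero_right (s : ℝ) : rhoG s 0 = 1 := by simp [rhoG]

theorem one_sub_le_rhoG (s x : ℝ) : 1 - π * x ^ 2 / s ^ 2 ≤ rhoG s x := by
  have := add_one_le_exp (-π * x ^ 2 / s ^ 2)
  rw [rhoG]; linarith [show -π * x ^ 2 / s ^ 2 = -(π * x ^ 2 / s ^ 2) by ring]

theorem rhoG_le_rhoG_of_abs_le (s : ℝ) {x y : ℝ} (h : |x| ≤ |y|) : rhoG s y ≤ rhoG s x := by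
  unfold rhoG
  apply exp_le_exp.2
  apply div_le_div_of_nonneg_right _ (sq_nonneg s)
  nlinarith [sq_le_sq.2 h, pi_pos]

theorem rhoG_le_one (s x : ℝ) : rhoG s x ≤ 1 :=
  (rhoG_le_rhoG_of_abs_le s (by simp)).trans_eq (rhoG_zero_right s)

theorem monotoneOn_rhoG (s : ℝ) : MonotoneOn (rhoG s) (Iic 0) := fun x hx y hy hxy =>
  rhoG_le_rhoG_of_abs_le s <| by
    rw [abs_of_nonpos (mem_Iic.1 hx), abs_of_nonpos (mem_Iic.1 hy)]; linarith

theorem antitoneOn_rhoG (s : ℝ) : AntitoneOn (rhoG s) (Ici 0) := fun x hx y hy hxy =>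
  rhoG_le_rhoG_of_abs_le s <| by
    rw [abs_of_nonneg (mem_Ici.1 hx), abs_of_nonneg (mem_Ici.1 hy)]; linarith

theorem rhoG_mul_rhoG (r u v : ℝ) :
    rhoG r u * rhoG r v = rhoG (√2 * r) (u + v) * rhoG (√2 * r) (u - v) := by
  simp only [rhoG, ← exp_add, mul_pow, sq_sqrt zero_le_two]
  ring_nf

theorem rhoG_sq (r x : ℝ) : rhoG r x ^ 2 = rhoG (√2 * r) (2 * x) := by
  rw [sq, rhoG_mul_rhoG, sub_self, rhoG_zero_right, mul_one, two_mul]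

theorem summable_rhoG_grid {s T : ℝ} (hs : s ≠ 0) (hT : T ≠ 0) (α : ℝ) :
    Summable fun k : ℤ => rhoG s (α + k * T) := by
  refine (HurwitzKernelBounds.summable_f_int 0 (α / T)
    (t := T ^ 2 / s ^ 2) (by positivity)).congr fun k => ?_
  rw [HurwitzKernelBounds.f_int, pow_zero, one_mul, rhoG]
  congr 1
  field_simp
  ring

theorem summable_rhoG_sq {r : ℝ} (hr : r ≠ 0) : Summable fun x : ℤ => rhoG r x ^ 2 := by
  simpa [rhoG_sq, mul_comm] using summable_rhoG_grid (by positivity : √2 * r ≠ 0) two_ne_zero 0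

noncomputable def periodizedRhoG (s T α : ℝ) : ℝ := ∑' k : ℤ, rhoG s (α + k * T)

theorem periodizedRhoG_le_add_two {s T : ℝ} (hs : s ≠ 0) (hT : 0 < T) (α β : ℝ) :
    periodizedRhoG s T β ≤ periodizedRhoG s T α + 2 := by
  rw [add_comm]
  exact tsum_grid_le_two_add_tsum_grid (rhoG_nonneg s) (rhoG_le_one s) (monotoneOn_rhoG s)
    (antitoneOn_rhoG s) hT (summable_rhoG_grid hs hT.ne' α) (summable_rhoG_grid hs hT.ne' β)

/- By Poisson summation the periodization at 0 is `s / T` times the dual theta series,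
whose zeroth term is already `1`. -/
theorem div_le_periodizedRhoG_zero {s T : ℝ} (hs : 0 < s) (hT : 0 < T) :
    s / T ≤ periodizedRhoG s T 0 := by
  have ha : 0 < T ^ 2 / s ^ 2 := by positivity
  have hpoisson := Real.tsum_exp_neg_mul_int_sq ha
  have hsqrt : (T ^ 2 / s ^ 2) ^ (1 / 2 : ℝ) = T / s := by
    rw [← Real.sqrt_eq_rpow, ← div_pow, Real.sqrt_sq (by positivity)]
  have hdual : 1 ≤ ∑' n : ℤ, exp (-π / (T ^ 2 / s ^ 2) * n ^ 2) := by
    have hsum : Summable fun n : ℤ => exp (-π / (T ^ 2 / s ^ 2) * n ^ 2) :=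
      (summable_rhoG_grid (div_pos hT hs).ne' one_ne_zero 0).congr fun n => by
        rw [rhoG]; congr 1; field_simp; ring
    simpa using hsum.le_tsum 0 fun n _ => (exp_pos _).le
  calc s / T = 1 / (T ^ 2 / s ^ 2) ^ (1 / 2 : ℝ) * 1 := by rw [hsqrt]; field_simp
    _ ≤ 1 / (T ^ 2 / s ^ 2) ^ (1 / 2 : ℝ) * ∑' n : ℤ, exp (-π / (T ^ 2 / s ^ 2) * n ^ 2) := by
        gcongr
    _ = periodizedRhoG s T 0 := by
        rw [← hpoisson, periodizedRhoG]
        refine tsum_congr fun k => ?_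
        rw [rhoG, zero_add]; congr 1; field_simp

theorem tsum_sq_sum_rhoG_eq {r : ℝ} (hr : r ≠ 0) {t : ℕ} (ht : 0 < t) (c : ℝ) :
    ∑' k : ℤ, (∑ y ∈ Finset.range t, rhoG r (k * t + y - c)) ^ 2 =
      ∑ y ∈ Finset.range t, ∑ y' ∈ Finset.range t,
        rhoG (√2 * r) (y - y') * periodizedRhoG (√2 * r) (2 * t) (y + y' - 2 * c) := by
  have hs : √2 * r ≠ 0 := by positivity
  have hT : (2 * t : ℝ) ≠ 0 := by positivity
  have hterm (k : ℤ) : (∑ y ∈ Finset.range t, rhoG r (k * t + y - c)) ^ 2 =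
      ∑ y ∈ Finset.range t, ∑ y' ∈ Finset.range t, rhoG (√2 * r) (y - y') *
        rhoG (√2 * r) (y + y' - 2 * c + k * (2 * t)) := by
    rw [sq, Finset.sum_mul_sum]
    refine Finset.sum_congr rfl fun y _ => Finset.sum_congr rfl fun y' _ => ?_
    rw [rhoG_mul_rhoG, mul_comm]
    congr 2 <;> ring
  rw [tsum_congr hterm, Summable.tsum_finsetSum fun y _ => summable_sum fun y' _ =>
    (summable_rhoG_grid hs hT _).mul_left _]
  refine Finset.sum_congr rfl fun y _ => ?_
  rw [Summable.tsum_finsetSum fun y' _ => (summable_rhoG_grid hs hT _).mul_left _]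
  exact Finset.sum_congr rfl fun y' _ => tsum_mul_left

theorem le_tsum_sq_sum_rhoG {r : ℝ} (hr : r ≠ 0) {t : ℕ} (ht : 0 < t) (c : ℝ) :
    (t : ℝ) ^ 2 * (rhoG (√2 * r) t * (periodizedRhoG (√2 * r) (2 * t) 0 - 2)) ≤
      ∑' k : ℤ, (∑ y ∈ Finset.range t, rhoG r (k * t + y - c)) ^ 2 := by
  have hs : √2 * r ≠ 0 := by positivity
  rw [tsum_sq_sum_rhoG_eq hr ht]
  calc (t : ℝ) ^ 2 * (rhoG (√2 * r) t * (periodizedRhoG (√2 * r) (2 * t) 0 - 2))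
      = ∑ _y ∈ Finset.range t, ∑ _y' ∈ Finset.range t,
          rhoG (√2 * r) t * (periodizedRhoG (√2 * r) (2 * t) 0 - 2) := by simp; ring
    _ ≤ _ := Finset.sum_le_sum fun y hy => Finset.sum_le_sum fun y' hy' => ?_
  have hy : (y : ℝ) < t := by exact_mod_cast Finset.mem_range.1 hy
  have hy' : (y' : ℝ) < t := by exact_mod_cast Finset.mem_range.1 hy'
  have hdist : |(y : ℝ) - y'| ≤ |(t : ℝ)| := by
    rw [abs_of_pos (by positivity : (0 : ℝ) < t), abs_le]
    constructor <;> linarith [y.cast_nonneg (α := ℝ), y'.cast_nonneg (α := ℝ)]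
  calc rhoG (√2 * r) t * (periodizedRhoG (√2 * r) (2 * t) 0 - 2)
      ≤ rhoG (√2 * r) t * periodizedRhoG (√2 * r) (2 * t) (y + y' - 2 * c) := by
        gcongr
        · exact rhoG_nonneg _ _
        · linarith [periodizedRhoG_le_add_two hs (by positivity : (0 : ℝ) < 2 * t)
            (y + y' - 2 * c) 0]
    _ ≤ rhoG (√2 * r) (y - y') * periodizedRhoG (√2 * r) (2 * t) (y + y' - 2 * c) := by
        gcongr
        · exact tsum_nonneg fun _ => rhoG_nonneg _ _
        · exact rhoG_le_rhoG_of_abs_le _ hdist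

theorem tsum_rhoG_sq_le {r : ℝ} (hr : r ≠ 0) {t : ℕ} (ht : 0 < t) :
    ∑' x : ℤ, rhoG r x ^ 2 ≤ t * (periodizedRhoG (√2 * r) (2 * t) 0 + 2) := by
  have : NeZero t := ⟨ht.ne'⟩
  have hs : √2 * r ≠ 0 := by positivity
  rw [tsum_int_eq_sum_fin_tsum (summable_rhoG_sq hr) t]
  calc ∑ i : Fin t, ∑' q : ℤ, rhoG r ((q * t + i : ℤ) : ℝ) ^ 2
      = ∑ i : Fin t, periodizedRhoG (√2 * r) (2 * t) (2 * i) := by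
        refine Finset.sum_congr rfl fun i _ => tsum_congr fun q => ?_
        rw [rhoG_sq]; push_cast; ring_nf
    _ ≤ ∑ _i : Fin t, (periodizedRhoG (√2 * r) (2 * t) 0 + 2) :=
        Finset.sum_le_sum fun i _ => periodizedRhoG_le_add_two hs (by positivity) _ _
    _ = t * (periodizedRhoG (√2 * r) (2 * t) 0 + 2) := by simp [mul_add]

theorem one_sub_inv_mul_le {n E G : ℝ} (hn : 1 ≤ n) (hE : 1 - 1 / (2 * n) ≤ E)
    (hG : 8 * n ≤ G) :
    (1 - 1 / n) * (G + 2) ≤ E * (G - 2) := by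
  set x := 1 / (2 * n) with hx_def
  have hx : 1 / n = 2 * x := by rw [hx_def]; field_simp
  have hx₀ : 0 ≤ 1 - x := by
    rw [sub_nonneg, div_le_one (by positivity)]; linarith
  have hGx : (1 - x) * (G + 2) ≤ G - 2 := by
    have : 4 ≤ x * (G + 2) := by
      rw [div_mul_eq_mul_div, le_div_iff₀ (by positivity)]; linarith
    linarith
  calc (1 - 1 / n) * (G + 2) ≤ (1 - x) * ((1 - x) * (G + 2)) := by
        rw [hx]; nlinarith [sq_nonneg x]
    _ ≤ (1 - x) * (G - 2) := by gcongr
    _ ≤ E * (G - 2) := by gcongr; linarith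

theorem stmt_6_general (n t : ℕ) (hn : 0 < n) (ht : 0 < t) (r : ℝ)
    (hrt : 30 * (t : ℝ) * (n : ℝ) * Real.log n ≤ r) (c : ℤ) :
    1 - 1 / (n : ℝ) ≤
      (∑' k : ℤ, (∑ y ∈ Finset.range t, rhoG r ((k : ℝ) * t + (y : ℝ) - (c : ℝ))) ^ 2) /
        ((t : ℝ) * ∑' x : ℤ, rhoG r (x : ℝ) ^ 2) := by
  obtain rfl | hn2 : n = 1 ∨ 2 ≤ n := by omega
  · simp only [Nat.cast_one, div_one, sub_self]
    positivity
  have hn2' : (2 : ℝ) ≤ n := by exact_mod_cast hn2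
  have hr : 20 * (t : ℝ) * n ≤ r := by
    have := Real.log_two_gt_d9
    have := Real.log_le_log (by norm_num) hn2'
    have : (0 : ℝ) < t * n := by positivity
    nlinarith
  have hr0 : 0 < r := by
    have : (0 : ℝ) < t * n := by positivity
    linarith
  set G := periodizedRhoG (√2 * r) (2 * t) 0
  have hG : 8 * (n : ℝ) ≤ G := by
    refine le_trans ?_ (div_le_periodizedRhoG_zero (by positivity) (by positivity))
    rw [le_div_iff₀ (by positivity)]
    nlinarith [Real.one_lt_sqrt_two]
  have hE : 1 - 1 / (2 * n) ≤ rhoG (√2 * r) t := by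
    refine le_trans ?_ (one_sub_le_rhoG _ _)
    rw [mul_pow, sq_sqrt zero_le_two, sub_le_sub_iff_left,
      div_le_div_iff₀ (by positivity) (by positivity)]
    nlinarith [pi_lt_four, mul_le_mul hr hr (by positivity) hr0.le]
  have hD : 0 < ∑' x : ℤ, rhoG r (x : ℝ) ^ 2 :=
    (summable_rhoG_sq hr0.ne').tsum_pos (fun _ => sq_nonneg _) 0 (by simp [rhoG_zero_right])
  rw [le_div_iff₀ (by positivity)]
  calc (1 - 1 / (n : ℝ)) * (t * ∑' x : ℤ, rhoG r (x : ℝ) ^ 2)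
      ≤ (1 - 1 / n) * (t * (t * (G + 2))) := by
        gcongr
        · rw [sub_nonneg, div_le_one (by positivity)]; linarith
        · exact tsum_rhoG_sq_le hr0.ne' ht
    _ ≤ t ^ 2 * (rhoG (√2 * r) t * (G - 2)) := by
        nlinarith [one_sub_inv_mul_le (by linarith) hE hG]
    _ ≤ _ := le_tsum_sq_sum_rhoG hr0.ne' ht c

/-- Center finding: for positive integers `n, t` and real `r ≥ 30·t·n·log n`, measuring
the residue mod `t` of the complex Gaussian state `|φ_c⟩ = Σ_{x∈ℤ} ρ_r(x) e^{-πix²/t}|x+c⟩`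
in the basis `{|ψ_d⟩}` yields `d = c mod t` with probability
`Σ_{k∈ℤ}(Σ_{y∈ℤ_t} ρ_r(kt+y-c))² / (t·Σ_{x∈ℤ} ρ_r(x)²) ≥ 1 - 1/n`. -/
theorem stmt_6 (n t : ℕ) (hn : 0 < n) (ht : 0 < t) (r : ℝ) (hr : 0 < r)
    (hrt : 30 * (t : ℝ) * (n : ℝ) * Real.log n ≤ r) (c : ℤ) :
    1 - 1 / (n : ℝ) ≤
      (∑' k : ℤ, (∑ y ∈ Finset.range t, rhoG r ((k : ℝ) * t + (y : ℝ) - (c : ℝ))) ^ 2) /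
        ((t : ℝ) * ∑' x : ℤ, rhoG r (x : ℝ) ^ 2) :=
  stmt_6_general n t hn ht r hrt c
end

section
/- Let n ≥ 1 and s > 0. Then sⁿ(1 + 2e^{-πs²})ⁿ ≤ ρ_s(ℤⁿ) ≤ sⁿ(1 + (2 + 1/s)e^{-πs²})ⁿ, where ρ_s(ℤⁿ) = Σ_{x∈ℤⁿ} exp(-π‖x‖²/s²). -/
/-!
The Gaussian factorises over coordinates, so `ρ_s(ℤⁿ) = ρ_s(ℤ)ⁿ`, and Poisson summation gives
`ρ_s(ℤ) = s · θ(π s²)` with `θ(c) = ∑_{k ∈ ℤ} e^{-c k²} = 1 + 2T`, `T = ∑_{m ≥ 1} e^{-c m²}`.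
Trivially `e^{-c} ≤ T`. Since `(m + 1)² ≥ m² + 1`, the tail `∑_{m ≥ 2} e^{-c m²}` is at most
`e^{-c} T`, and by the integral test `T ≤ ∫₀^∞ e^{-c x²} dx = √(π / c) / 2`, which is `1 / (2s)`
for `c = π s²`.
-/

open Real

lemma hasSum_fin_pi_prod {α : Type*} {n : ℕ} {f : Fin n → α → ℝ}
    (hf : ∀ i, Summable (f i)) (hf0 : ∀ i, 0 ≤ f i) :
    HasSum (fun x : Fin n → α => ∏ i, f i (x i)) (∏ i, ∑' a, f i a) := by
  induction n with
  | zero => simp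
  | succ n ih =>
    have htail := ih (fun i => hf i.succ) (fun i => hf0 i.succ)
    set g := fun x : Fin n → α => ∏ i : Fin n, f i.succ (x i)
    have hg0 : 0 ≤ g := fun x => Finset.prod_nonneg fun i _ => hf0 i.succ (x i)
    have hmul := (hf 0).hasSum.mul htail ((hf 0).mul_of_nonneg (g := g) htail.summable (hf0 0) hg0)
    rw [Fin.prod_univ_succ, ← (Fin.consEquiv fun _ => α).hasSum_iff]
    simpa [Function.comp_def, Fin.consEquiv, Fin.prod_univ_succ] using hmul

section Gaussian

variable {c : ℝ}

lemma antitoneOn_exp_neg_mul_sq (hc : 0 < c) :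
    AntitoneOn (fun x : ℝ => exp (-c * x ^ 2)) (Set.Ici 0) := by
  intro x hx y _ hxy
  simp only [exp_le_exp, neg_mul, neg_le_neg_iff]
  gcongr

lemma summable_nat_exp_neg_mul_sq (hc : 0 < c) :
    Summable fun n : ℕ => exp (-c * n ^ 2) :=
  (antitoneOn_exp_neg_mul_sq hc).summable_of_integrableOn_Ioi_zero
    (integrable_exp_neg_mul_sq hc).integrableOn fun _ _ => (exp_pos _).le

lemma summable_int_exp_neg_mul_sq (hc : 0 < c) :
    Summable fun k : ℤ => exp (-c * k ^ 2) :=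
  .of_nat_of_neg (by simpa using summable_nat_exp_neg_mul_sq hc)
    (by simpa using summable_nat_exp_neg_mul_sq hc)

lemma tsum_int_exp_neg_mul_sq_eq (hc : 0 < c) :
    ∑' k : ℤ, exp (-c * k ^ 2) = 1 + 2 * ∑' n : ℕ, exp (-c * ((n : ℝ) + 1) ^ 2) := by
  rw [tsum_int_eq_zero_add_two_mul_tsum_pnat (fun k => by simp) (summable_int_exp_neg_mul_sq hc)]
  simp only [Int.cast_natCast]
  rw [tsum_pnat_eq_tsum_succ (f := fun n : ℕ => exp (-c * (n : ℝ) ^ 2))]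
  simp [nsmul_eq_mul]

lemma tsum_exp_neg_mul_succ_sq_le (hc : 0 < c) :
    ∑' n : ℕ, exp (-c * ((n : ℝ) + 1) ^ 2) ≤ √(π / c) / 2 := by
  rw [← integral_gaussian_Ioi]
  exact_mod_cast (antitoneOn_exp_neg_mul_sq hc).tsum_add_one_le_integral
    (integrable_exp_neg_mul_sq hc).integrableOn fun _ _ => (exp_pos _).le

lemma summable_exp_neg_mul_succ_sq (hc : 0 < c) :
    Summable fun n : ℕ => exp (-c * ((n : ℝ) + 1) ^ 2) := by
  simpa using (summable_nat_add_iff 1).mpr (summable_nat_exp_neg_mul_sq hc)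

lemma exp_neg_le_tsum_exp_neg_mul_succ_sq (hc : 0 < c) :
    exp (-c) ≤ ∑' n : ℕ, exp (-c * ((n : ℝ) + 1) ^ 2) := by
  simpa using (summable_exp_neg_mul_succ_sq hc).le_tsum 0 fun _ _ => (exp_pos _).le

lemma tsum_exp_neg_mul_succ_sq_le_exp_neg_mul (hc : 0 < c) :
    ∑' n : ℕ, exp (-c * ((n : ℝ) + 1) ^ 2) ≤ exp (-c) * (1 + √(π / c) / 2) := by
  have hsum := summable_exp_neg_mul_succ_sq hc
  have htail : ∑' n : ℕ, exp (-c * ((n : ℝ) + 1 + 1) ^ 2)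
      ≤ ∑' n : ℕ, exp (-c) * exp (-c * ((n : ℝ) + 1) ^ 2) := by
    refine Summable.tsum_le_tsum (fun n => ?_) ?_ (hsum.mul_left _)
    · rw [← exp_add, exp_le_exp]
      nlinarith [(n.cast_nonneg : (0 : ℝ) ≤ n)]
    · simpa using (summable_nat_add_iff 1).mpr hsum
  rw [tsum_mul_left] at htail
  calc ∑' n : ℕ, exp (-c * ((n : ℝ) + 1) ^ 2)
      = exp (-c) + ∑' n : ℕ, exp (-c * ((n : ℝ) + 1 + 1) ^ 2) := by
        rw [hsum.tsum_eq_zero_add]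
        simp
    _ ≤ exp (-c) + exp (-c) * (√(π / c) / 2) := by
        gcongr
        exact htail.trans (by gcongr; exact tsum_exp_neg_mul_succ_sq_le hc)
    _ = exp (-c) * (1 + √(π / c) / 2) := by ring

lemma one_add_two_mul_exp_neg_le_tsum_int (hc : 0 < c) :
    1 + 2 * exp (-c) ≤ ∑' k : ℤ, exp (-c * k ^ 2) := by
  rw [tsum_int_exp_neg_mul_sq_eq hc]
  linarith [exp_neg_le_tsum_exp_neg_mul_succ_sq hc]

lemma tsum_int_exp_neg_mul_sq_le (hc : 0 < c) :
    ∑' k : ℤ, exp (-c * k ^ 2) ≤ 1 + (2 + √(π / c)) * exp (-c) := by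
  rw [tsum_int_exp_neg_mul_sq_eq hc]
  linarith [tsum_exp_neg_mul_succ_sq_le_exp_neg_mul hc]

end Gaussian

lemma tsum_int_exp_neg_pi_mul_sq_div_sq {s : ℝ} (hs : 0 < s) :
    ∑' k : ℤ, exp (-π * k ^ 2 / s ^ 2) = s * ∑' k : ℤ, exp (-(π * s ^ 2) * k ^ 2) := by
  have h := tsum_exp_neg_mul_int_sq (inv_pos.mpr (pow_pos hs 2))
  rw [inv_rpow (sq_nonneg s), ← sqrt_eq_rpow, sqrt_sq hs.le, one_div, inv_inv] at h
  convert h using 4 with k k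
  · ring
  · field_simp

lemma tsum_fin_pi_exp_neg_pi_mul_sum_sq_div_sq (n : ℕ) {s : ℝ} (hs : s ≠ 0) :
    ∑' x : Fin n → ℤ, exp (-π * (∑ i, (x i : ℝ) ^ 2) / s ^ 2)
      = (∑' k : ℤ, exp (-π * k ^ 2 / s ^ 2)) ^ n := by
  have hsum : Summable fun k : ℤ => exp (-π * k ^ 2 / s ^ 2) := by
    refine (summable_int_exp_neg_mul_sq (c := π / s ^ 2) (by positivity)).congr fun k => ?_
    ring_nf
  rw [← Fin.prod_const n (∑' k : ℤ, _),
    ← (hasSum_fin_pi_prod (fun _ => hsum) fun _ _ => (exp_pos _).le).tsum_eq]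
  refine tsum_congr fun x => ?_
  rw [← exp_sum, Finset.mul_sum, Finset.sum_div]

theorem stmt_13_general (n : ℕ) (s : ℝ) (hs : 0 < s) :
    s ^ n * (1 + 2 * Real.exp (-π * s ^ 2)) ^ n ≤
      (∑' x : Fin n → ℤ, Real.exp (-π * (∑ i, ((x i : ℝ)) ^ 2) / s ^ 2)) ∧
    (∑' x : Fin n → ℤ, Real.exp (-π * (∑ i, ((x i : ℝ)) ^ 2) / s ^ 2)) ≤
      s ^ n * (1 + (2 + 1 / s) * Real.exp (-π * s ^ 2)) ^ n := by
  have hc : 0 < π * s ^ 2 := by positivity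
  have hsqrt : √(π / (π * s ^ 2)) = 1 / s := by
    rw [div_mul_cancel_left₀ pi_ne_zero, one_div, sqrt_inv, sqrt_sq hs.le]
  have hlower := one_add_two_mul_exp_neg_le_tsum_int hc
  have hupper := tsum_int_exp_neg_mul_sq_le hc
  rw [hsqrt] at hupper
  rw [tsum_fin_pi_exp_neg_pi_mul_sum_sq_div_sq n hs.ne', tsum_int_exp_neg_pi_mul_sq_div_sq hs,
    ← mul_pow, ← mul_pow, neg_mul]
  constructor
  · gcongr
  · gcongr

/-- For `n ≥ 1` and `s > 0`:
`sⁿ(1 + 2e^{-πs²})ⁿ ≤ ρ_s(ℤⁿ) ≤ sⁿ(1 + (2 + 1/s)e^{-πs²})ⁿ`, where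
`ρ_s(ℤⁿ) = Σ_{x∈ℤⁿ} exp(-π‖x‖²/s²)`. -/
theorem stmt_13 (n : ℕ) (hn : 1 ≤ n) (s : ℝ) (hs : 0 < s) :
    s ^ n * (1 + 2 * Real.exp (-π * s ^ 2)) ^ n ≤
      (∑' x : Fin n → ℤ, Real.exp (-π * (∑ i, ((x i : ℝ)) ^ 2) / s ^ 2)) ∧
    (∑' x : Fin n → ℤ, Real.exp (-π * (∑ i, ((x i : ℝ)) ^ 2) / s ^ 2)) ≤
      s ^ n * (1 + (2 + 1 / s) * Real.exp (-π * s ^ 2)) ^ n :=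
  stmt_13_general n s hs
end
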